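/- If a collection Q of probability measures on {0,1}^ℕ is separable in its means, then Q is UME-learnable. -/

import Mathlib

open MeasureTheory Filter

/-- The sup-distance `‖p − q‖_∞ = ⨆ j, |p j − q j|` between two vectors. -/
noncomputable def supDist {ι : Type*} (p q : ι → ℝ) : ℝ := ⨆ j, |p j - q j|

/-- The mean vector of a measure on `{0,1}^ι`: `Mean(μ)_j = μ {x | x j = 1}`. -/
noncomputable def meanVec {ι : Type*} (μ : Measure (ι → Bool)) : ι → ℝ :=
  fun j => (μ {x | x j = true}).toReal

/-- A set `M ⊆ [0,1]^ι` of mean vectors has a countable `ε`-cover: a countable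
`D ⊆ [0,1]^ι` such that every `q ∈ M` is within sup-distance `< ε` of some `p ∈ D`. -/
def HasCountableCover {ι : Type*} (M : Set (ι → ℝ)) (ε : ℝ) : Prop :=
  ∃ D : Set (ι → ℝ), D.Countable ∧ (∀ p ∈ D, ∀ j, p j ∈ Set.Icc (0 : ℝ) 1) ∧
    ∀ q ∈ M, ∃ p ∈ D, supDist q p < ε

/-- A collection of distributions is separable in its means if its set of mean vectors
has a countable `ε`-cover for every `ε > 0`. -/
def SeparableInMeans {ι : Type*} (Q : Set (Measure (ι → Bool))) : Prop :=
  ∀ ε : ℝ, 0 < ε → HasCountableCover (meanVec '' Q) ε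

/-- UME-learnability of a collection of distributions on `{0,1}^ι`. -/
def UMELearnable {ι : Type*} (Q : Set (Measure (ι → Bool))) : Prop :=
  ∃ A : (n : ℕ) → (Fin n → (ι → Bool)) → ι → ℝ,
    (∀ n, Measurable (A n)) ∧
    (∀ n S j, A n S j ∈ Set.Icc (0 : ℝ) 1) ∧
    ∀ μ ∈ Q,
      Tendsto (fun n : ℕ =>
          ∫ S, supDist (A n S) (meanVec μ) ∂(Measure.pi fun _ : Fin n => μ))
        atTop (nhds 0)

/-!
Enumerate a countable family `p₀, p₁, …` of candidate mean vectors that comes arbitrarily close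
to every mean vector of `Q`. With `n` samples, run a Scheffé-type tournament among the first
`m` candidates: for each pair of candidates fix a coordinate at which they are almost
`‖·‖_∞`-far apart, and select the candidate whose largest deviation from the empirical means
on these at most `m²` test coordinates is smallest. Whenever all these empirical means are
`δ`-accurate, the winner is within `3ε + 3δ` of the true mean vector, `ε` being the distance
from the truth to the nearest of the `m` candidates; by Chebyshev's inequality and a union bound
this accuracy fails with probability at most `m² / (4nδ²)`. Letting `m → ∞` slowly with `n`
and `δ = 1/m` makes the expected error tend to zero.
-/

open Set ProbabilityTheory

section SupDist

variable {ι : Type*} {p q r : ι → ℝ}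

lemma supDist_nonneg (p q : ι → ℝ) : 0 ≤ supDist p q :=
  Real.iSup_nonneg fun _ => abs_nonneg _

lemma supDist_comm (p q : ι → ℝ) : supDist p q = supDist q p := by
  simp only [supDist, abs_sub_comm]

lemma supDist_le {c : ℝ} (h : ∀ j, |p j - q j| ≤ c) (hc : 0 ≤ c) : supDist p q ≤ c :=
  Real.iSup_le h hc

lemma abs_sub_le_supDist (h : BddAbove (range fun j => |p j - q j|)) (j : ι) :
    |p j - q j| ≤ supDist p q :=
  le_ciSup h j

lemma bddAbove_abs_sub_of_mem_Icc (hp : ∀ j, p j ∈ Icc (0 : ℝ) 1)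
    (hq : ∀ j, q j ∈ Icc (0 : ℝ) 1) : BddAbove (range fun j => |p j - q j|) :=
  ⟨1, by rintro _ ⟨j, rfl⟩; exact abs_sub_le_of_nonneg_of_le (hp j).1 (hp j).2 (hq j).1 (hq j).2⟩

lemma supDist_le_one_of_mem_Icc (hp : ∀ j, p j ∈ Icc (0 : ℝ) 1)
    (hq : ∀ j, q j ∈ Icc (0 : ℝ) 1) : supDist p q ≤ 1 :=
  supDist_le (fun j => abs_sub_le_of_nonneg_of_le (hp j).1 (hp j).2 (hq j).1 (hq j).2) zero_le_one

lemma supDist_triangle (hp : ∀ j, p j ∈ Icc (0 : ℝ) 1) (hq : ∀ j, q j ∈ Icc (0 : ℝ) 1)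
    (hr : ∀ j, r j ∈ Icc (0 : ℝ) 1) : supDist p r ≤ supDist p q + supDist q r :=
  supDist_le
    (fun j => (abs_sub_le _ _ _).trans (add_le_add
      (abs_sub_le_supDist (bddAbove_abs_sub_of_mem_Icc hp hq) j)
      (abs_sub_le_supDist (bddAbove_abs_sub_of_mem_Icc hq hr) j)))
    (add_nonneg (supDist_nonneg p q) (supDist_nonneg q r))

lemma exists_supDist_lt_abs_sub_add [Nonempty ι] (p q : ι → ℝ) {δ : ℝ} (hδ : 0 < δ) :
    ∃ j, supDist p q < |p j - q j| + δ := by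
  by_contra! h
  have : supDist p q ≤ supDist p q - δ := ciSup_le fun j => le_sub_iff_add_le.2 (h j)
  linarith

noncomputable def separatingCoord [Nonempty ι] (δ : ℝ) (p q : ι → ℝ) : ι :=
  Classical.epsilon fun j => supDist p q < |p j - q j| + δ

lemma supDist_lt_abs_sub_separatingCoord_add [Nonempty ι] {δ : ℝ} (hδ : 0 < δ) (p q : ι → ℝ) :
    supDist p q < |p (separatingCoord δ p q) - q (separatingCoord δ p q)| + δ :=
  Classical.epsilon_spec (exists_supDist_lt_abs_sub_add p q hδ)

end SupDist

lemma measurable_of_dependsOn_finset_coords {κ ι β : Type*} [Finite κ] [MeasurableSpace β]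
    (J : Finset ι) {f : (κ → ι → Bool) → β}
    (hf : ∀ S S' : κ → ι → Bool, (∀ k, ∀ j ∈ J, S k j = S' k j) → f S = f S') :
    Measurable f := by
  classical
  let extend : (κ → J → Bool) → κ → ι → Bool := fun r k j =>
    if h : j ∈ J then r k ⟨j, h⟩ else false
  have : f = (f ∘ extend) ∘ fun S k (j : J) => S k j :=
    funext fun S => hf _ _ fun k j hj => by simp [extend, hj]
  rw [this]
  exact (measurable_of_finite _).comp (by fun_prop)

theorem measureReal_abs_sum_div_sub_integral_ge_le {Ω : Type*} [MeasurableSpace Ω]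
    {μ : Measure Ω} [IsProbabilityMeasure μ] {f : Ω → ℝ} (hf : MemLp f 2 μ) {n : ℕ} (hn : 0 < n)
    {δ : ℝ} (hδ : 0 < δ) :
    (Measure.pi fun _ : Fin n => μ).real {S | δ ≤ |(∑ k, f (S k)) / n - μ[f]|}
      ≤ Var[f; μ] / (n * δ ^ 2) := by
  set P := Measure.pi fun _ : Fin n => μ
  have hfk (k : Fin n) : MemLp (fun S : Fin n → Ω => f (S k)) 2 P :=
    hf.comp_measurePreserving (measurePreserving_eval _ k)
  have hmean : P[fun S => (∑ k, f (S k)) / n] = μ[f] := by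
    rw [integral_div, integral_finsetSum _ fun k _ => (hfk k).integrable one_le_two]
    simp only [P, integral_comp_eval (μ := fun _ : Fin n => μ) hf.aestronglyMeasurable]
    simp [hn.ne']
  have hvar : Var[fun S : Fin n → Ω => ∑ k, f (S k); P] = n * Var[f; μ] := by
    have hindep := iIndepFun_pi (μ := fun _ : Fin n => μ) (X := fun _ => f)
      fun _ => hf.aestronglyMeasurable.aemeasurable
    have := IndepFun.variance_sum (s := Finset.univ) (fun k _ => hfk k)
      fun k _ l _ hkl => hindep.indepFun hkl
    convert this using 1
    · congr 1; ext S; simp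
    · simp only [P, (measurePreserving_eval (fun _ : Fin n => μ) _).variance_fun_comp
        hf.aestronglyMeasurable.aemeasurable]
      simp
  have hmem : MemLp (fun S : Fin n → Ω => (∑ k, f (S k)) / n) 2 P := by
    simp_rw [div_eq_mul_inv]
    exact (memLp_finsetSum _ fun k _ => hfk k).mul_const _
  calc P.real {S | δ ≤ |(∑ k, f (S k)) / n - μ[f]|}
      ≤ Var[fun S : Fin n → Ω => (∑ k, f (S k)) / n; P] / δ ^ 2 := by
        rw [← hmean]
        exact ENNReal.toReal_le_of_le_ofReal (div_nonneg (variance_nonneg _ _) (sq_nonneg _))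
          (meas_ge_le_variance_div_sq hmem hδ)
    _ = Var[f; μ] / (n * δ ^ 2) := by
        simp_rw [div_eq_mul_inv _ (n : ℝ), variance_mul_const, hvar]
        field_simp

lemma integral_le_add_measureReal_compl {Ω : Type*} [MeasurableSpace Ω] {P : Measure Ω}
    [IsProbabilityMeasure P] {f : Ω → ℝ} {G : Set Ω} (hG : MeasurableSet G) {c : ℝ}
    (hc : 0 ≤ c) (hf0 : ∀ x, 0 ≤ f x) (hf1 : ∀ x, f x ≤ 1) (hfG : ∀ x ∈ G, f x ≤ c) :
    ∫ x, f x ∂P ≤ c + P.real Gᶜ := by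
  have hint : Integrable (Gᶜ.indicator 1) P := (integrable_const (1 : ℝ)).indicator hG.compl
  calc ∫ x, f x ∂P ≤ ∫ x, (c + Gᶜ.indicator 1 x) ∂P := by
        refine integral_mono_of_nonneg (ae_of_all _ hf0) ((integrable_const c).add hint)
          (ae_of_all _ fun x => ?_)
        by_cases hx : x ∈ G
        · simpa [hx] using hfG x hx
        · simp only [indicator_of_mem (mem_compl hx), Pi.one_apply]
          linarith [hf1 x]
    _ = c + P.real Gᶜ := by
        rw [integral_add (integrable_const c) hint, integral_indicator_one hG.compl]
        simp

section Bernoulli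

variable {ι : Type*}

noncomputable def empiricalMean {n : ℕ} (S : Fin n → ι → Bool) (j : ι) : ℝ :=
  (∑ k, ((S k j).toNat : ℝ)) / n

lemma empiricalMean_congr {n : ℕ} {S S' : Fin n → ι → Bool} {j : ι} (h : ∀ k, S k j = S' k j) :
    empiricalMean S j = empiricalMean S' j := by
  simp only [empiricalMean, h]

lemma meanVec_eq_integral (μ : Measure (ι → Bool)) (j : ι) :
    meanVec μ j = ∫ x, ((x j).toNat : ℝ) ∂μ := by
  have : (fun x : ι → Bool => ((x j).toNat : ℝ)) = {x | x j = true}.indicator 1 := by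
    ext x
    cases h : x j <;> simp [h]
  rw [this, integral_indicator_one (measurableSet_eq_fun (measurable_pi_apply j) measurable_const)]
  rfl

lemma meanVec_mem_Icc (μ : Measure (ι → Bool)) [IsProbabilityMeasure μ] (j : ι) :
    meanVec μ j ∈ Icc (0 : ℝ) 1 :=
  ⟨ENNReal.toReal_nonneg, measureReal_le_one⟩

lemma measureReal_abs_empiricalMean_sub_meanVec_ge_le (μ : Measure (ι → Bool))
    [IsProbabilityMeasure μ] {n : ℕ} (hn : 0 < n) {δ : ℝ} (hδ : 0 < δ) (j : ι) :
    (Measure.pi fun _ : Fin n => μ).real {S | δ ≤ |empiricalMean S j - meanVec μ j|}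
      ≤ 1 / (4 * n * δ ^ 2) := by
  have hmeas : Measurable fun x : ι → Bool => ((x j).toNat : ℝ) :=
    (measurable_of_countable fun b : Bool => (b.toNat : ℝ)).comp (measurable_pi_apply j)
  have hbound : ∀ᵐ x ∂μ, ((x j).toNat : ℝ) ∈ Icc (0 : ℝ) 1 :=
    ae_of_all _ fun x => by cases x j <;> simp
  rw [meanVec_eq_integral]
  refine (measureReal_abs_sum_div_sub_integral_ge_le
    (memLp_of_bounded hbound hmeas.aestronglyMeasurable 2) hn hδ).trans ?_
  have hvar : Var[fun x : ι → Bool => ((x j).toNat : ℝ); μ] ≤ 1 / 4 :=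
    (variance_le_sq_of_bounded hbound hmeas.aemeasurable).trans_eq (by norm_num)
  calc _ ≤ 1 / 4 / (n * δ ^ 2) := by gcongr
    _ = 1 / (4 * n * δ ^ 2) := by ring

end Bernoulli

section Tournament

variable {ι : Type*} [Nonempty ι] (p : ℕ → ι → ℝ) (m : ℕ) (δ : ℝ)

open Classical in
noncomputable def testCoords : Finset ι :=
  (Finset.range m ×ˢ Finset.range m).image fun i => separatingCoord δ (p i.1) (p i.2)

lemma separatingCoord_mem_testCoords {i i' : ℕ} (hi : i < m) (hi' : i' < m) :
    separatingCoord δ (p i) (p i') ∈ testCoords p m δ := by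
  classical
  exact Finset.mem_image.2 ⟨(i, i'), by simp [hi, hi'], rfl⟩

lemma card_testCoords_le : (testCoords p m δ).card ≤ m ^ 2 := by
  classical
  calc (testCoords p m δ).card ≤ (Finset.range m ×ˢ Finset.range m).card := Finset.card_image_le
    _ = m ^ 2 := by simp [sq]

noncomputable def testDist (e : ι → ℝ) (i : ℕ) : ℝ :=
  supDist (fun j : testCoords p m δ => e j) fun j => p i j

lemma abs_sub_le_testDist {e : ι → ℝ} {j : ι} (hj : j ∈ testCoords p m δ) (i : ℕ) :
    |e j - p i j| ≤ testDist p m δ e i :=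
  abs_sub_le_supDist (p := fun j : testCoords p m δ => e j) (q := fun j => p i j)
    (Set.finite_range _).bddAbove ⟨j, hj⟩

noncomputable def tournamentWinner (e : ι → ℝ) : ℕ :=
  Classical.epsilon fun i => i < m ∧ ∀ i' < m, testDist p m δ e i ≤ testDist p m δ e i'

lemma tournamentWinner_spec (hm : 0 < m) (e : ι → ℝ) :
    tournamentWinner p m δ e < m ∧
      ∀ i' < m, testDist p m δ e (tournamentWinner p m δ e) ≤ testDist p m δ e i' := by
  obtain ⟨i, hi, hmin⟩ := (Finset.range m).exists_min_image (testDist p m δ e)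
    (Finset.nonempty_range_iff.2 hm.ne')
  have hex : ∃ i, i < m ∧ ∀ i' < m, testDist p m δ e i ≤ testDist p m δ e i' :=
    ⟨i, Finset.mem_range.1 hi, fun i' hi' => hmin i' (Finset.mem_range.2 hi')⟩
  exact Classical.epsilon_spec hex

lemma tournamentWinner_congr {e e' : ι → ℝ} (h : ∀ j ∈ testCoords p m δ, e j = e' j) :
    tournamentWinner p m δ e = tournamentWinner p m δ e' := by
  have : testDist p m δ e = testDist p m δ e' := by
    ext i
    simp only [testDist]
    congr 1
    ext j
    exact h j j.2
  simp only [tournamentWinner, this]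

theorem supDist_tournamentWinner_le (hp : ∀ i j, p i j ∈ Icc (0 : ℝ) 1) {q : ι → ℝ}
    (hq : ∀ j, q j ∈ Icc (0 : ℝ) 1) (hδ : 0 < δ) {e : ι → ℝ}
    (he : ∀ j ∈ testCoords p m δ, |e j - q j| ≤ δ) {i₀ : ℕ} (hi₀ : i₀ < m) :
    supDist (p (tournamentWinner p m δ e)) q ≤ 3 * supDist (p i₀) q + 3 * δ := by
  obtain ⟨hw, hmin⟩ := tournamentWinner_spec p m δ (Nat.zero_lt_of_lt hi₀) e
  set w := tournamentWinner p m δ e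
  set ε := supDist (p i₀) q
  have hε : 0 ≤ ε := supDist_nonneg _ _
  have hi₀_close : ∀ j ∈ testCoords p m δ, |e j - p i₀ j| ≤ ε + δ := fun j hj => by
    have := abs_sub_le_supDist (bddAbove_abs_sub_of_mem_Icc (hp i₀) hq) j
    calc |e j - p i₀ j| ≤ |e j - q j| + |q j - p i₀ j| := abs_sub_le _ _ _
      _ ≤ ε + δ := by rw [abs_sub_comm (q j)]; linarith [he j hj]
  have hw_score : testDist p m δ e w ≤ ε + δ :=
    (hmin i₀ hi₀).trans (supDist_le (fun j => hi₀_close j j.2) (by linarith))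
  set j := separatingCoord δ (p w) (p i₀)
  have hj := separatingCoord_mem_testCoords p m δ hw hi₀
  have hwj : |p w j - p i₀ j| ≤ 2 * ε + 2 * δ := by
    have := abs_sub_le_testDist p m δ (e := e) hj w
    calc |p w j - p i₀ j| ≤ |p w j - e j| + |e j - p i₀ j| := abs_sub_le _ _ _
      _ ≤ 2 * ε + 2 * δ := by rw [abs_sub_comm (p w j)]; linarith [hi₀_close j hj]
  have hwi₀ := supDist_lt_abs_sub_separatingCoord_add hδ (p w) (p i₀)
  have := supDist_triangle (hp w) (hp i₀) hq
  linarith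

end Tournament

section Estimator

variable {ι : Type*} [Nonempty ι] (p : ℕ → ι → ℝ) (m : ℕ) (δ : ℝ)

noncomputable def tournamentEstimate {n : ℕ} (S : Fin n → ι → Bool) : ι → ℝ :=
  p (tournamentWinner p m δ (empiricalMean S))

lemma measurable_tournamentEstimate (n : ℕ) :
    Measurable (tournamentEstimate p m δ (n := n)) :=
  measurable_of_dependsOn_finset_coords (testCoords p m δ) fun _ _ h => by
    rw [tournamentEstimate, tournamentEstimate, tournamentWinner_congr p m δ fun j hj =>
      empiricalMean_congr fun k => h k j hj]

theorem integral_supDist_tournamentEstimate_le (hp : ∀ i j, p i j ∈ Icc (0 : ℝ) 1)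
    (μ : Measure (ι → Bool)) [IsProbabilityMeasure μ] {n : ℕ} (hn : 0 < n) (hδ : 0 < δ)
    {i₀ : ℕ} (hi₀ : i₀ < m) :
    ∫ S, supDist (tournamentEstimate p m δ S) (meanVec μ) ∂(Measure.pi fun _ : Fin n => μ)
      ≤ 3 * supDist (p i₀) (meanVec μ) + 3 * δ + m ^ 2 / (4 * n * δ ^ 2) := by
  set P := Measure.pi fun _ : Fin n => μ
  set J := testCoords p m δ
  set G := {S : Fin n → ι → Bool | ∀ j ∈ J, |empiricalMean S j - meanVec μ j| < δ}
  have hG : MeasurableSet G := measurable_mem.1 <|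
    measurable_of_dependsOn_finset_coords J fun S S' h => by
      simp only [G, mem_ofPred_eq]
      exact propext <| forall₂_congr fun j hj => by
        rw [empiricalMean_congr fun k => h k j hj]
  have hbad : P.real Gᶜ ≤ m ^ 2 / (4 * n * δ ^ 2) :=
    calc P.real Gᶜ ≤ P.real (⋃ j ∈ J, {S | δ ≤ |empiricalMean S j - meanVec μ j|}) :=
          measureReal_mono (fun S hS => by simpa [G] using hS) (measure_ne_top _ _)
      _ ≤ ∑ j ∈ J, P.real {S | δ ≤ |empiricalMean S j - meanVec μ j|} :=
          measureReal_biUnion_finset_le _ _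
      _ ≤ ∑ _j ∈ J, 1 / (4 * n * δ ^ 2) := Finset.sum_le_sum fun j _ =>
          measureReal_abs_empiricalMean_sub_meanVec_ge_le μ hn hδ j
      _ ≤ m ^ 2 * (1 / (4 * n * δ ^ 2)) := by
          rw [Finset.sum_const, nsmul_eq_mul]
          gcongr
          exact_mod_cast card_testCoords_le p m δ
      _ = m ^ 2 / (4 * n * δ ^ 2) := by ring
  have hq := meanVec_mem_Icc μ
  have hε := supDist_nonneg (p i₀) (meanVec μ)
  calc _ ≤ 3 * supDist (p i₀) (meanVec μ) + 3 * δ + P.real Gᶜ :=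
        integral_le_add_measureReal_compl hG (by positivity) (fun _ => supDist_nonneg _ _)
          (fun _ => supDist_le_one_of_mem_Icc (hp _) hq) fun S hS =>
            supDist_tournamentWinner_le p m δ hp hq hδ (fun j hj => (hS j hj).le) hi₀
    _ ≤ _ := by linarith

end Estimator

-- `⌊n^{1/8}⌋`, so that with `δ = 1/m` the failure probability `m² / (4nδ²) = m⁴ / (4n)` of the
-- tournament still tends to zero.
def candidateCount (n : ℕ) : ℕ := Nat.sqrt (Nat.sqrt (Nat.sqrt n))

lemma candidateCount_pow_le (n : ℕ) : candidateCount n ^ 8 ≤ n :=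
  calc candidateCount n ^ 8 = ((candidateCount n ^ 2) ^ 2) ^ 2 := by ring
    _ ≤ (Nat.sqrt (Nat.sqrt n) ^ 2) ^ 2 := by gcongr; exact Nat.sqrt_le' _
    _ ≤ Nat.sqrt n ^ 2 := by gcongr; exact Nat.sqrt_le' _
    _ ≤ n := Nat.sqrt_le' n

lemma tendsto_candidateCount : Tendsto candidateCount atTop atTop :=
  tendsto_atTop_atTop_of_monotone
    (fun _ _ h => Nat.sqrt_le_sqrt (Nat.sqrt_le_sqrt (Nat.sqrt_le_sqrt h)))
    fun b => ⟨((b ^ 2) ^ 2) ^ 2, by simp [candidateCount, Nat.sqrt_eq']⟩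

section UME

variable {ι : Type*} [Nonempty ι] (p : ℕ → ι → ℝ)

noncomputable def umeEstimator (n : ℕ) : (Fin n → ι → Bool) → ι → ℝ :=
  tournamentEstimate p (candidateCount n) (candidateCount n : ℝ)⁻¹

theorem integral_supDist_umeEstimator_le (hp : ∀ i j, p i j ∈ Icc (0 : ℝ) 1)
    (μ : Measure (ι → Bool)) [IsProbabilityMeasure μ] {n i₀ : ℕ} (hi₀ : i₀ < candidateCount n) :
    ∫ S, supDist (umeEstimator p n S) (meanVec μ) ∂(Measure.pi fun _ : Fin n => μ)
      ≤ 3 * supDist (p i₀) (meanVec μ) + 4 / candidateCount n := by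
  set m := candidateCount n
  have hm : (1 : ℝ) ≤ m := by exact_mod_cast Nat.one_le_of_lt hi₀
  have hmn : (m : ℝ) ^ 8 ≤ n := by exact_mod_cast candidateCount_pow_le n
  have hn : 0 < n := by exact_mod_cast (one_pos.trans_le (one_le_pow₀ hm)).trans_le hmn
  refine (integral_supDist_tournamentEstimate_le p m _ hp μ hn (by positivity) hi₀).trans ?_
  have hsample : (m : ℝ) ^ 2 / (4 * n * (m : ℝ)⁻¹ ^ 2) ≤ 1 / m := by
    rw [div_le_div_iff₀ (by positivity) (by positivity)]
    field_simp
    nlinarith [pow_le_pow_right₀ hm (show 5 ≤ 8 by norm_num)]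
  have : 3 * (m : ℝ)⁻¹ + 1 / m = 4 / m := by ring
  linarith

theorem tendsto_integral_supDist_umeEstimator (hp : ∀ i j, p i j ∈ Icc (0 : ℝ) 1)
    (μ : Measure (ι → Bool)) [IsProbabilityMeasure μ]
    (hμ : ∀ ε > 0, ∃ i, supDist (p i) (meanVec μ) < ε) :
    Tendsto (fun n => ∫ S, supDist (umeEstimator p n S) (meanVec μ)
      ∂(Measure.pi fun _ : Fin n => μ)) atTop (nhds 0) := by
  refine tendsto_order.2 ⟨fun a ha => Eventually.of_forall fun n =>
    ha.trans_le (integral_nonneg fun _ => supDist_nonneg _ _), fun a ha => ?_⟩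
  obtain ⟨i₀, hi₀⟩ := hμ (a / 6) (by positivity)
  have hrate : Tendsto (fun n => 4 / (candidateCount n : ℝ)) atTop (nhds 0) :=
    tendsto_const_nhds.div_atTop (tendsto_natCast_atTop_atTop.comp tendsto_candidateCount)
  filter_upwards [tendsto_candidateCount.eventually_gt_atTop i₀,
    hrate.eventually_lt_const (half_pos ha)] with n hn hrate_n
  have := integral_supDist_umeEstimator_le p hp μ hn
  linarith

end UME

lemma SeparableInMeans.exists_seq {ι : Type*} {Q : Set (Measure (ι → Bool))}
    (h : SeparableInMeans Q) :
    ∃ p : ℕ → ι → ℝ, (∀ i j, p i j ∈ Icc (0 : ℝ) 1) ∧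
      ∀ μ ∈ Q, ∀ ε > 0, ∃ i, supDist (p i) (meanVec μ) < ε := by
  choose D hDc hD01 hDcov using fun k : ℕ => h (1 / (k + 1)) (by positivity)
  obtain ⟨p, hp⟩ := ((countable_iUnion hDc).insert 0).exists_eq_range (insert_nonempty _ _)
  refine ⟨p, fun i j => ?_, fun μ hμ ε hε => ?_⟩
  · have hi : p i ∈ insert 0 (⋃ k, D k) := hp ▸ mem_range_self i
    rcases hi with h0 | hi
    · simp [h0]
    · obtain ⟨k, hk⟩ := mem_iUnion.1 hi
      exact hD01 k _ hk j
  · obtain ⟨k, hk⟩ := exists_nat_one_div_lt hε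
    obtain ⟨d, hd, hdμ⟩ := hDcov k (meanVec μ) (mem_image_of_mem _ hμ)
    obtain ⟨i, rfl⟩ : d ∈ range p := hp ▸ mem_insert_of_mem _ (mem_iUnion.2 ⟨k, hd⟩)
    exact ⟨i, (supDist_comm _ _).trans_lt (hdμ.trans hk)⟩

/-- If a collection of probability measures on `{0,1}^ℕ` is separable in its means,
then it is UME-learnable. -/
theorem separable_implies_UMELearnable (Q : Set (Measure (ℕ → Bool)))
    (hQprob : ∀ μ ∈ Q, IsProbabilityMeasure μ)
    (hsep : SeparableInMeans Q) : UMELearnable Q := by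
  obtain ⟨p, hp, hdense⟩ := hsep.exists_seq
  refine ⟨umeEstimator p, fun n => measurable_tournamentEstimate p _ _ n,
    fun n S j => hp _ j, fun μ hμ => ?_⟩
  have := hQprob μ hμ
  exact tendsto_integral_supDist_umeEstimator p hp μ (hdense μ hμ)
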